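/- Let G be an undirected connected graph on nodes 1,…,N, let f, B, C satisfy the Assumption (OFP), and let xᵢ, kᵢⱼ be a continuously differentiable solution of the adaptively coupled system on [0,∞) with xᵢ(t) ∈ X for all t ≥ 0. Then for every pair i,j adjacent in G: (a) the weight kᵢⱼ(t) is nondecreasing in t; (b) kᵢⱼ(t) is bounded above; and (c) kᵢⱼ(t) converges as t → ∞, with lim_{t→∞} kᵢⱼ(t) = kᵢⱼ(0) + γᵢⱼ·∫₀^∞ |yᵢ(t) − yⱼ(t)|² dt, so the final value of each weight equals its initial value plus γᵢⱼ times the squared L² norm of the synchronization error across that link. -/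

import Mathlib

/-!
Along an edge, `k̇ᵢⱼ = γᵢⱼ |yᵢ - yⱼ|² ≥ 0`, so `kᵢⱼ` is nondecreasing; once it is bounded it
converges, and the limit is `kᵢⱼ(0)` plus the integral of the derivative.

Boundedness comes from a Lyapunov function `V` built from `∑ᵢⱼ (xᵢ - xⱼ)ᵀ P (xᵢ - xⱼ)` and
`N ∑_{i ~ j} (kᵢⱼ - a)² / γᵢⱼ`. The mean value theorem and (OFP) bound the drift part of `V̇` by
`θ ∑ᵢⱼ |yᵢ - yⱼ|²`; because `PB = Cᵀ` the coupling part is `-2N ∑ᵢⱼ kᵢⱼ |yᵢ - yⱼ|²`, which the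
weight part cancels up to `-2Na ∑_{i ~ j} |yᵢ - yⱼ|²`. On a connected graph, chaining along a path
bounds every `|yᵢ - yⱼ|²` by `4^N ∑_{i ~ j} |yᵢ - yⱼ|²`, so `V̇ ≤ 0` for `a = θ N 4^N / 2`, and
`V(t) ≤ V(0)` bounds every weight.
-/

open Matrix MeasureTheory Filter Topology

section Calculus

variable {ι : Type*} [Fintype ι]

lemma dotProduct_self_nonneg (v : ι → ℝ) : 0 ≤ v ⬝ᵥ v :=
  Finset.sum_nonneg fun i _ => mul_self_nonneg (v i)

lemma dotProduct_add_self_le (u v : ι → ℝ) :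
    (u + v) ⬝ᵥ (u + v) ≤ 2 * (u ⬝ᵥ u) + 2 * (v ⬝ᵥ v) := by
  have := dotProduct_self_nonneg (u - v)
  simp only [dotProduct_add, add_dotProduct, dotProduct_sub, sub_dotProduct,
    dotProduct_comm v u] at this ⊢
  linarith

lemma dotProduct_mulVec_comm {P : Matrix ι ι ℝ} (hP : Pᵀ = P) (v w : ι → ℝ) :
    v ⬝ᵥ (P *ᵥ w) = w ⬝ᵥ (P *ᵥ v) := by
  rw [dotProduct_mulVec, ← vecMul_transpose, hP, dotProduct_comm]

lemma dotProduct_mul_add_transpose_mul_mulVec {P : Matrix ι ι ℝ} (hP : Pᵀ = P)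
    (A : Matrix ι ι ℝ) (v : ι → ℝ) :
    v ⬝ᵥ ((P * A + Aᵀ * P) *ᵥ v) = 2 * (v ⬝ᵥ (P *ᵥ (A *ᵥ v))) := by
  rw [add_mulVec, dotProduct_add, ← mulVec_mulVec, ← mulVec_mulVec, dotProduct_mulVec v Aᵀ,
    vecMul_transpose, dotProduct_mulVec_comm hP (A *ᵥ v), two_mul]

lemma HasDerivAt.dotProduct {u w : ℝ → ι → ℝ} {u' w' : ι → ℝ} {t : ℝ}
    (hu : HasDerivAt u u' t) (hw : HasDerivAt w w' t) :
    HasDerivAt (fun s => u s ⬝ᵥ w s) (u' ⬝ᵥ w t + u t ⬝ᵥ w') t := by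
  have := HasDerivAt.fun_sum (u := Finset.univ) fun i _ =>
    (hasDerivAt_pi.1 hu i).mul (hasDerivAt_pi.1 hw i)
  simpa [_root_.dotProduct, Finset.sum_add_distrib] using this

lemma HasDerivAt.mulVec {o : Type*} [Fintype o] (M : Matrix o ι ℝ) {u : ℝ → ι → ℝ}
    {u' : ι → ℝ} {t : ℝ} (hu : HasDerivAt u u' t) :
    HasDerivAt (fun s => M *ᵥ u s) (M *ᵥ u') t := by
  refine hasDerivAt_pi.2 fun i => ?_
  have := HasDerivAt.fun_sum (u := Finset.univ) fun j _ =>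
    (hasDerivAt_pi.1 hu j).const_mul (M i j)
  simpa [Matrix.mulVec, _root_.dotProduct] using this

lemma HasDerivAt.dotProduct_mulVec_self {P : Matrix ι ι ℝ} (hP : Pᵀ = P) {u : ℝ → ι → ℝ}
    {u' : ι → ℝ} {t : ℝ} (hu : HasDerivAt u u' t) :
    HasDerivAt (fun s => u s ⬝ᵥ (P *ᵥ u s)) (2 * (u t ⬝ᵥ (P *ᵥ u'))) t := by
  convert hu.dotProduct (hu.mulVec P) using 1
  rw [dotProduct_mulVec_comm hP u']
  ring

lemma monotoneOn_Ici_of_hasDerivAt_nonneg {g g' : ℝ → ℝ} {a : ℝ}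
    (hg : ∀ t, a ≤ t → HasDerivAt g (g' t) t) (hg' : ∀ t, a ≤ t → 0 ≤ g' t) :
    MonotoneOn g (Set.Ici a) := by
  refine monotoneOn_of_hasDerivWithinAt_nonneg (f' := g') (convex_Ici a)
    (fun t ht => (hg t ht).continuousAt.continuousWithinAt) (fun t ht => ?_) (fun t ht => ?_)
  all_goals rw [interior_Ici] at ht
  exacts [(hg t ht.le).hasDerivWithinAt, hg' t ht.le]

lemma antitoneOn_Ici_of_hasDerivAt_nonpos {g g' : ℝ → ℝ} {a : ℝ}
    (hg : ∀ t, a ≤ t → HasDerivAt g (g' t) t) (hg' : ∀ t, a ≤ t → g' t ≤ 0) :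
    AntitoneOn g (Set.Ici a) := by
  refine antitoneOn_of_hasDerivWithinAt_nonpos (f' := g') (convex_Ici a)
    (fun t ht => (hg t ht).continuousAt.continuousWithinAt) (fun t ht => ?_) (fun t ht => ?_)
  all_goals rw [interior_Ici] at ht
  exacts [(hg t ht.le).hasDerivWithinAt, hg' t ht.le]

lemma tendsto_add_integral_Ioi_of_hasDerivAt_nonneg {g g' : ℝ → ℝ} {a : ℝ}
    (hg : ∀ t, a ≤ t → HasDerivAt g (g' t) t) (hg' : ∀ t, a ≤ t → 0 ≤ g' t)
    (hbdd : ∃ M, ∀ t, a ≤ t → g t ≤ M) :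
    Tendsto g atTop (𝓝 (g a + ∫ t in Set.Ioi a, g' t)) := by
  obtain ⟨M, hM⟩ := hbdd
  have hmono := monotoneOn_Ici_of_hasDerivAt_nonneg hg hg'
  have hlim : Tendsto g atTop (𝓝 (⨆ t, g (max a t))) := by
    refine (tendsto_atTop_ciSup (fun s t hst => hmono (le_max_left a s) (le_max_left a t)
      (max_le_max_left a hst)) ⟨M, ?_⟩).congr' ?_
    · rintro _ ⟨t, rfl⟩
      exact hM _ (le_max_left a t)
    · filter_upwards [eventually_ge_atTop a] with t ht
      rw [max_eq_right ht]
  rwa [integral_Ioi_of_hasDerivAt_of_nonneg' hg (fun t ht => hg' t (le_of_lt ht)) hlim,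
    add_sub_cancel]

end Calculus

section IncrementalPassivity

variable {ι : Type*} [Fintype ι] {X : Set (ι → ℝ)} {f : (ι → ℝ) → ι → ℝ}
  {J : (ι → ℝ) → Matrix ι ι ℝ}

theorem Convex.dotProduct_mulVec_sub_le (hX : Convex ℝ X)
    (hf : ∀ z ∈ X, HasFDerivAt f (J z).mulVecLin.toContinuousLinearMap z) (M : Matrix ι ι ℝ)
    {a b : ι → ℝ} (ha : a ∈ X) (hb : b ∈ X) {c : ℝ}
    (hc : ∀ z ∈ X, (a - b) ⬝ᵥ (M *ᵥ (J z *ᵥ (a - b))) ≤ c) :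
    (a - b) ⬝ᵥ (M *ᵥ (f a - f b)) ≤ c := by
  set v := a - b
  have hseg : ∀ s ∈ Set.Icc (0 : ℝ) 1, b + s • v ∈ X := fun s hs => by
    convert hX hb ha (sub_nonneg.2 hs.2) hs.1 (by ring) using 1
    simp only [v]
    module
  have hderiv : ∀ s ∈ Set.Icc (0 : ℝ) 1, HasDerivAt (fun s => v ⬝ᵥ (M *ᵥ f (b + s • v)))
      (v ⬝ᵥ (M *ᵥ (J (b + s • v) *ᵥ v))) s := fun s hs => by
    have hpath : HasDerivAt (fun s : ℝ => b + s • v) v s := by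
      simpa using ((hasDerivAt_id s).smul_const v).const_add b
    have hfpath := (hf _ (hseg s hs)).comp_hasDerivAt s hpath
    simpa using (hasDerivAt_const s v).dotProduct (hfpath.mulVec M)
  have := (convex_Icc (0 : ℝ) 1).image_sub_le_mul_sub_of_deriv_le
    (fun s hs => (hderiv s hs).continuousAt.continuousWithinAt)
    (fun s hs => (hderiv s (interior_subset hs)).differentiableAt.differentiableWithinAt)
    (fun s hs => (hderiv s (interior_subset hs)).deriv ▸ hc _ (hseg s (interior_subset hs)))
    0 (by simp) 1 (by simp) zero_le_one
  simpa [v, mulVec_sub, dotProduct_sub] using this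

theorem Convex.dotProduct_mulVec_sub_le_of_lmi {o : Type*} [Fintype o] (hX : Convex ℝ X)
    (hf : ∀ z ∈ X, HasFDerivAt f (J z).mulVecLin.toContinuousLinearMap z)
    {C : Matrix o ι ℝ} {θ : ℝ} {P : Matrix ι ι ℝ} (hP : Pᵀ = P)
    (hLMI : ∀ z ∈ X, ∀ v : ι → ℝ,
      v ⬝ᵥ ((P * J z + (J z)ᵀ * P) *ᵥ v) ≤ θ * ((C *ᵥ v) ⬝ᵥ (C *ᵥ v)))
    {a b : ι → ℝ} (ha : a ∈ X) (hb : b ∈ X) :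
    (a - b) ⬝ᵥ (P *ᵥ (f a - f b)) ≤ θ / 2 * ((C *ᵥ (a - b)) ⬝ᵥ (C *ᵥ (a - b))) :=
  hX.dotProduct_mulVec_sub_le hf P ha hb fun z hz => by
    linarith [hLMI z hz (a - b), dotProduct_mul_add_transpose_mul_mulVec hP (J z) (a - b)]

end IncrementalPassivity

section DoubleSums

variable {V M : Type*} [Fintype V]

lemma Finset.single_le_sum_sum [AddCommMonoid M] [PartialOrder M] [IsOrderedAddMonoid M]
    {F : V → V → M} (hF : ∀ i j, 0 ≤ F i j) (i j : V) : F i j ≤ ∑ a, ∑ b, F a b :=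
  (Finset.single_le_sum (fun b _ => hF i b) (Finset.mem_univ j)).trans
    (Finset.single_le_sum (f := fun a => ∑ b, F a b)
      (fun a _ => Finset.sum_nonneg fun b _ => hF a b) (Finset.mem_univ i))

lemma Finset.sum_sum_eq_zero_of_antisymm [AddCommGroup M] [IsAddTorsionFree M]
    {F : V → V → M} (hF : ∀ i j, F i j = -F j i) : ∑ i, ∑ j, F i j = 0 := by
  refine self_eq_neg.1 ?_
  calc ∑ i, ∑ j, F i j = ∑ i, ∑ j, F j i := Finset.sum_comm
    _ = ∑ i, ∑ j, -F i j := Finset.sum_congr rfl fun i _ => Finset.sum_congr rfl fun j _ => hF j i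
    _ = -∑ i, ∑ j, F i j := by simp only [Finset.sum_neg_distrib]

end DoubleSums

namespace SimpleGraph

variable {V o : Type*} [Fintype V] [Fintype o] (G : SimpleGraph V) [DecidableRel G.Adj]

def edgeEnergy (y : V → o → ℝ) : ℝ :=
  ∑ i, ∑ j, if G.Adj i j then (y i - y j) ⬝ᵥ (y i - y j) else 0

variable {G}

lemma edgeEnergy_nonneg (y : V → o → ℝ) : 0 ≤ G.edgeEnergy y :=
  Finset.sum_nonneg fun _ _ => Finset.sum_nonneg fun _ _ =>
    ite_nonneg (dotProduct_self_nonneg _) le_rfl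

lemma Adj.dotProduct_sub_le_edgeEnergy {i j : V} (h : G.Adj i j) (y : V → o → ℝ) :
    (y i - y j) ⬝ᵥ (y i - y j) ≤ G.edgeEnergy y := by
  have := Finset.single_le_sum_sum
    (fun a b => ite_nonneg (p := G.Adj a b) (dotProduct_self_nonneg (y a - y b)) le_rfl) i j
  rw [if_pos h] at this
  exact this

lemma Walk.dotProduct_sub_le_pow_mul_edgeEnergy {i j : V} (w : G.Walk i j) (y : V → o → ℝ) :
    (y i - y j) ⬝ᵥ (y i - y j) ≤ 4 ^ w.length * G.edgeEnergy y := by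
  induction w with
  | nil => simpa using edgeEnergy_nonneg y
  | @cons i b j h w ih =>
    have hS := edgeEnergy_nonneg (G := G) y
    have h4 : (1 : ℝ) ≤ 4 ^ w.length := one_le_pow₀ (by norm_num)
    calc (y i - y j) ⬝ᵥ (y i - y j)
        = ((y i - y b) + (y b - y j)) ⬝ᵥ ((y i - y b) + (y b - y j)) := by
          rw [sub_add_sub_cancel]
      _ ≤ 2 * ((y i - y b) ⬝ᵥ (y i - y b)) + 2 * ((y b - y j) ⬝ᵥ (y b - y j)) :=
          dotProduct_add_self_le _ _
      _ ≤ 2 * G.edgeEnergy y + 2 * (4 ^ w.length * G.edgeEnergy y) := by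
          gcongr
          exact h.dotProduct_sub_le_edgeEnergy y
      _ ≤ 4 ^ (w.cons h).length * G.edgeEnergy y := by
          rw [length_cons, pow_succ]
          nlinarith

lemma Connected.dotProduct_sub_le_pow_mul_edgeEnergy (hG : G.Connected) (y : V → o → ℝ)
    (i j : V) : (y i - y j) ⬝ᵥ (y i - y j) ≤ 4 ^ Fintype.card V * G.edgeEnergy y := by
  classical
  obtain ⟨w⟩ := hG i j
  calc (y i - y j) ⬝ᵥ (y i - y j)
      ≤ 4 ^ (w.toPath : G.Walk i j).length * G.edgeEnergy y :=
        Walk.dotProduct_sub_le_pow_mul_edgeEnergy _ y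
    _ ≤ 4 ^ Fintype.card V * G.edgeEnergy y := by
        gcongr
        · exact edgeEnergy_nonneg y
        · norm_num
        · exact (w.toPath.2.length_lt).le

end SimpleGraph

section DiffusiveCoupling

variable {V o : Type*} [Fintype V]

lemma sum_sum_sub_dotProduct_sub [Fintype o] (v w : V → o → ℝ) :
    ∑ i, ∑ j, (v i - v j) ⬝ᵥ (w i - w j) =
      2 * (Fintype.card V * ∑ i, v i ⬝ᵥ w i - (∑ i, v i) ⬝ᵥ ∑ i, w i) := by
  simp only [dotProduct_sub, sub_dotProduct, Finset.sum_sub_distrib, sum_dotProduct,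
    dotProduct_sum, Finset.sum_const, Finset.card_univ, nsmul_eq_mul, ← Finset.mul_sum]
  rw [Finset.sum_comm (f := fun i j => v j ⬝ᵥ w i)]
  ring

def diffusiveCoupling (κ : V → V → ℝ) (y : V → o → ℝ) (i : V) : o → ℝ :=
  ∑ j, κ i j • (y j - y i)

variable {κ : V → V → ℝ}

lemma sum_diffusiveCoupling (hκ : ∀ i j, κ i j = κ j i) (y : V → o → ℝ) :
    ∑ i, diffusiveCoupling κ y i = 0 :=
  Finset.sum_sum_eq_zero_of_antisymm fun i j => by rw [hκ, ← smul_neg, neg_sub]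

lemma two_mul_sum_dotProduct_diffusiveCoupling [Fintype o] (hκ : ∀ i j, κ i j = κ j i)
    (y : V → o → ℝ) :
    2 * ∑ i, y i ⬝ᵥ diffusiveCoupling κ y i =
      -∑ i, ∑ j, κ i j * ((y i - y j) ⬝ᵥ (y i - y j)) := by
  rw [← sub_eq_zero, sub_neg_eq_add]
  convert Finset.sum_sum_eq_zero_of_antisymm (F := fun i j => κ i j * (y j ⬝ᵥ y j - y i ⬝ᵥ y i))
    fun i j => by rw [hκ]; ring using 1
  simp only [diffusiveCoupling, dotProduct_sum, Finset.mul_sum, ← Finset.sum_add_distrib]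
  refine Finset.sum_congr rfl fun i _ => Finset.sum_congr rfl fun j _ => ?_
  simp only [dotProduct_smul, smul_eq_mul, dotProduct_sub, sub_dotProduct, dotProduct_comm (y j)]
  ring

lemma sum_sum_sub_dotProduct_diffusiveCoupling_sub [Fintype o] (hκ : ∀ i j, κ i j = κ j i)
    (y : V → o → ℝ) :
    ∑ i, ∑ j, (y i - y j) ⬝ᵥ (diffusiveCoupling κ y i - diffusiveCoupling κ y j) =
      -Fintype.card V * ∑ i, ∑ j, κ i j * ((y i - y j) ⬝ᵥ (y i - y j)) := by
  rw [sum_sum_sub_dotProduct_sub, sum_diffusiveCoupling hκ, dotProduct_zero, sub_zero,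
    mul_left_comm, two_mul_sum_dotProduct_diffusiveCoupling hκ]
  ring

end DiffusiveCoupling

section AdaptiveNetwork

variable {ι o V : Type*} [Fintype ι] [Fintype o] [Fintype V]

def coupledField (f : (ι → ℝ) → ι → ℝ) (B : Matrix ι o ℝ) (C : Matrix o ι ℝ) (κ : V → V → ℝ)
    (x : V → ι → ℝ) (i : V) : ι → ℝ :=
  f (x i) + B *ᵥ diffusiveCoupling κ (fun j => C *ᵥ x j) i

theorem sum_sum_dotProduct_mulVec_coupledField_sub_le {X : Set (ι → ℝ)} (hX : Convex ℝ X)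
    {f : (ι → ℝ) → ι → ℝ} {J : (ι → ℝ) → Matrix ι ι ℝ}
    (hf : ∀ z ∈ X, HasFDerivAt f (J z).mulVecLin.toContinuousLinearMap z)
    {B : Matrix ι o ℝ} {C : Matrix o ι ℝ} {θ : ℝ} {P : Matrix ι ι ℝ} (hP : Pᵀ = P)
    (hLMI : ∀ z ∈ X, ∀ v : ι → ℝ,
      v ⬝ᵥ ((P * J z + (J z)ᵀ * P) *ᵥ v) ≤ θ * ((C *ᵥ v) ⬝ᵥ (C *ᵥ v)))
    (hPB : P * B = Cᵀ) {κ : V → V → ℝ} (hκ : ∀ i j, κ i j = κ j i) {x : V → ι → ℝ}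
    (hx : ∀ i, x i ∈ X) :
    ∑ i, ∑ j, (x i - x j) ⬝ᵥ (P *ᵥ (coupledField f B C κ x i - coupledField f B C κ x j)) ≤
      θ / 2 * ∑ i, ∑ j, (C *ᵥ x i - C *ᵥ x j) ⬝ᵥ (C *ᵥ x i - C *ᵥ x j) -
        Fintype.card V * ∑ i, ∑ j, κ i j * ((C *ᵥ x i - C *ᵥ x j) ⬝ᵥ (C *ᵥ x i - C *ᵥ x j)) := by
  set u := diffusiveCoupling κ (fun j => C *ᵥ x j)
  have hsplit : ∀ i j, (x i - x j) ⬝ᵥ (P *ᵥ (coupledField f B C κ x i - coupledField f B C κ x j))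
      = (x i - x j) ⬝ᵥ (P *ᵥ (f (x i) - f (x j))) + (C *ᵥ x i - C *ᵥ x j) ⬝ᵥ (u i - u j) := by
    intro i j
    have hfield : coupledField f B C κ x i - coupledField f B C κ x j
        = (f (x i) - f (x j)) + B *ᵥ (u i - u j) := by
      simp only [coupledField, mulVec_sub, u]
      abel
    rw [hfield, mulVec_add, dotProduct_add, mulVec_mulVec, hPB, dotProduct_mulVec _ Cᵀ,
      vecMul_transpose, mulVec_sub C]
  have hincr : ∑ i, ∑ j, (x i - x j) ⬝ᵥ (P *ᵥ (f (x i) - f (x j))) ≤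
      θ / 2 * ∑ i, ∑ j, (C *ᵥ x i - C *ᵥ x j) ⬝ᵥ (C *ᵥ x i - C *ᵥ x j) := by
    simp only [Finset.mul_sum, ← mulVec_sub]
    exact Finset.sum_le_sum fun i _ => Finset.sum_le_sum fun j _ =>
      hX.dotProduct_mulVec_sub_le_of_lmi hf hP hLMI (hx i) (hx j)
  simp only [hsplit, Finset.sum_add_distrib]
  rw [sum_sum_sub_dotProduct_diffusiveCoupling_sub hκ]
  linarith

end AdaptiveNetwork

section Lyapunov

variable {ι o V : Type*} [Fintype ι] [Fintype o] [Fintype V] {G : SimpleGraph V}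
  [DecidableRel G.Adj] {P : Matrix ι ι ℝ} {γ : V → V → ℝ} {a : ℝ}

variable (G P γ a) in
/-- `2N` times the paper's `V` with `k*ᵢⱼ = a` on the edges: with `x̃ᵢ = xᵢ - x̄`,
`∑ᵢⱼ (xᵢ - xⱼ)ᵀ P (xᵢ - xⱼ) = 2N ∑ᵢ x̃ᵢᵀ P x̃ᵢ`. -/
noncomputable def adaptiveLyapunov (x : V → ι → ℝ) (κ : V → V → ℝ) : ℝ :=
  ∑ i, ∑ j, (x i - x j) ⬝ᵥ (P *ᵥ (x i - x j)) +
    Fintype.card V * ∑ i, ∑ j, if G.Adj i j then (κ i j - a) ^ 2 / γ i j else 0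

lemma sq_le_mul_adaptiveLyapunov (hP : P.PosSemidef) (hγ : ∀ i j, G.Adj i j → 0 < γ i j)
    (x : V → ι → ℝ) (κ : V → V → ℝ) {i j : V} (hij : G.Adj i j) :
    (κ i j - a) ^ 2 ≤ γ i j * adaptiveLyapunov G P γ a x κ := by
  have hquad : 0 ≤ ∑ i, ∑ j, (x i - x j) ⬝ᵥ (P *ᵥ (x i - x j)) :=
    Finset.sum_nonneg fun i _ => Finset.sum_nonneg fun j _ => by
      simpa using hP.dotProduct_mulVec_nonneg (x i - x j)
  have hterm : ∀ i j, 0 ≤ if G.Adj i j then (κ i j - a) ^ 2 / γ i j else 0 := fun i j => by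
    split_ifs with h
    exacts [div_nonneg (sq_nonneg _) (hγ i j h).le, le_rfl]
  have hcard : (1 : ℝ) ≤ Fintype.card V := by
    exact_mod_cast Fintype.card_pos_iff.2 ⟨i⟩
  rw [← div_le_iff₀' (hγ i j hij)]
  calc (κ i j - a) ^ 2 / γ i j
      ≤ ∑ i, ∑ j, if G.Adj i j then (κ i j - a) ^ 2 / γ i j else 0 := by
        simpa only [hij, if_true] using Finset.single_le_sum_sum hterm i j
    _ ≤ Fintype.card V * ∑ i, ∑ j, if G.Adj i j then (κ i j - a) ^ 2 / γ i j else 0 :=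
        le_mul_of_one_le_left (Finset.sum_nonneg fun _ _ => Finset.sum_nonneg fun _ _ =>
          hterm _ _) hcard
    _ ≤ adaptiveLyapunov G P γ a x κ := le_add_of_nonneg_left hquad

lemma hasDerivAt_adaptiveLyapunov (hP : Pᵀ = P) {x : V → ℝ → ι → ℝ} {x' : V → ι → ℝ}
    {k : V → V → ℝ → ℝ} {k' : V → V → ℝ} {t : ℝ} (hx : ∀ i, HasDerivAt (x i) (x' i) t)
    (hk : ∀ i j, G.Adj i j → HasDerivAt (k i j) (k' i j) t) :
    HasDerivAt (fun s => adaptiveLyapunov G P γ a (x · s) (k · · s))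
      (2 * ∑ i, ∑ j, (x i t - x j t) ⬝ᵥ (P *ᵥ (x' i - x' j)) +
        Fintype.card V * ∑ i, ∑ j,
          if G.Adj i j then 2 * (k i j t - a) * k' i j / γ i j else 0) t := by
  simp only [Finset.mul_sum (a := (2 : ℝ))]
  refine (HasDerivAt.fun_sum fun i _ => HasDerivAt.fun_sum fun j _ =>
    ((hx i).sub (hx j)).dotProduct_mulVec_self hP).add ?_
  refine (HasDerivAt.fun_sum fun i _ => HasDerivAt.fun_sum fun j _ => ?_).const_mul _
  split_ifs with h
  · simpa using (((hk i j h).sub_const a).pow 2).div_const (γ i j)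
  · exact hasDerivAt_const t 0

theorem adaptiveLyapunov_deriv_nonpos {X : Set (ι → ℝ)} (hX : Convex ℝ X)
    {f : (ι → ℝ) → ι → ℝ} {J : (ι → ℝ) → Matrix ι ι ℝ}
    (hf : ∀ z ∈ X, HasFDerivAt f (J z).mulVecLin.toContinuousLinearMap z)
    {B : Matrix ι o ℝ} {C : Matrix o ι ℝ} {θ : ℝ} (hP : Pᵀ = P)
    (hLMI : ∀ z ∈ X, ∀ v : ι → ℝ,
      v ⬝ᵥ ((P * J z + (J z)ᵀ * P) *ᵥ v) ≤ θ * ((C *ᵥ v) ⬝ᵥ (C *ᵥ v)))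
    (hPB : P * B = Cᵀ) (hG : G.Connected) (hθ : 0 ≤ θ)
    (ha : θ * Fintype.card V * 4 ^ Fintype.card V ≤ 2 * a) {κ : V → V → ℝ}
    (hκ : ∀ i j, κ i j = κ j i) (hκG : ∀ i j, ¬ G.Adj i j → κ i j = 0) {x : V → ι → ℝ}
    (hx : ∀ i, x i ∈ X) :
    2 * ∑ i, ∑ j, (x i - x j) ⬝ᵥ (P *ᵥ (coupledField f B C κ x i - coupledField f B C κ x j)) +
      Fintype.card V * ∑ i, ∑ j, (if G.Adj i j then
        2 * (κ i j - a) * ((C *ᵥ x i - C *ᵥ x j) ⬝ᵥ (C *ᵥ x i - C *ᵥ x j)) else 0) ≤ 0 := by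
  set y : V → o → ℝ := fun i => C *ᵥ x i
  set N : ℝ := (Fintype.card V : ℝ)
  have hflow := sum_sum_dotProduct_mulVec_coupledField_sub_le hX hf hP hLMI hPB hκ hx
  have hpoincare : ∑ i, ∑ j, (y i - y j) ⬝ᵥ (y i - y j) ≤
      N * (N * (4 ^ Fintype.card V * G.edgeEnergy y)) := by
    calc _ ≤ ∑ _i : V, ∑ _j : V, 4 ^ Fintype.card V * G.edgeEnergy y :=
          Finset.sum_le_sum fun i _ => Finset.sum_le_sum fun j _ =>
            hG.dotProduct_sub_le_pow_mul_edgeEnergy y i j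
      _ = _ := by simp [N]
  have hadapt : ∑ i, ∑ j, (if G.Adj i j then 2 * (κ i j - a) * ((y i - y j) ⬝ᵥ (y i - y j))
      else 0) = 2 * ∑ i, ∑ j, κ i j * ((y i - y j) ⬝ᵥ (y i - y j)) - 2 * a * G.edgeEnergy y := by
    simp only [SimpleGraph.edgeEnergy, Finset.mul_sum, ← Finset.sum_sub_distrib]
    refine Finset.sum_congr rfl fun i _ => Finset.sum_congr rfl fun j _ => ?_
    split_ifs with h
    · ring
    · simp [hκG i j h]
  rw [hadapt]
  have hN : 0 ≤ N := Nat.cast_nonneg _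
  nlinarith [mul_le_mul_of_nonneg_left hpoincare hθ,
    mul_nonneg (mul_nonneg hN (G.edgeEnergy_nonneg y)) (sub_nonneg.2 ha)]

theorem antitoneOn_adaptiveLyapunov {X : Set (ι → ℝ)} (hX : Convex ℝ X)
    {f : (ι → ℝ) → ι → ℝ} {J : (ι → ℝ) → Matrix ι ι ℝ}
    (hf : ∀ z ∈ X, HasFDerivAt f (J z).mulVecLin.toContinuousLinearMap z)
    {B : Matrix ι o ℝ} {C : Matrix o ι ℝ} {θ : ℝ} (hP : Pᵀ = P)
    (hLMI : ∀ z ∈ X, ∀ v : ι → ℝ,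
      v ⬝ᵥ ((P * J z + (J z)ᵀ * P) *ᵥ v) ≤ θ * ((C *ᵥ v) ⬝ᵥ (C *ᵥ v)))
    (hPB : P * B = Cᵀ) (hG : G.Connected) (hθ : 0 ≤ θ)
    (ha : θ * Fintype.card V * 4 ^ Fintype.card V ≤ 2 * a) (hγ : ∀ i j, G.Adj i j → γ i j ≠ 0)
    {x : V → ℝ → ι → ℝ} {k : V → V → ℝ → ℝ} (hksym : ∀ i j t, k i j t = k j i t)
    (hknonadj : ∀ i j, ¬ G.Adj i j → ∀ t, k i j t = 0)
    (hxode : ∀ i t, 0 ≤ t →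
      HasDerivAt (x i) (coupledField f B C (fun i j => k i j t) (fun i => x i t) i) t)
    (hkode : ∀ i j, G.Adj i j → ∀ t, 0 ≤ t → HasDerivAt (k i j)
      (γ i j * ((C *ᵥ x i t - C *ᵥ x j t) ⬝ᵥ (C *ᵥ x i t - C *ᵥ x j t))) t)
    (hXinv : ∀ i t, 0 ≤ t → x i t ∈ X) :
    AntitoneOn (fun t => adaptiveLyapunov G P γ a (x · t) (k · · t)) (Set.Ici 0) := by
  refine antitoneOn_Ici_of_hasDerivAt_nonpos (fun t ht => hasDerivAt_adaptiveLyapunov hP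
    (fun i => hxode i t ht) (fun i j h => hkode i j h t ht)) fun t ht => ?_
  have hcancel : ∀ i j, (if G.Adj i j then 2 * (k i j t - a) *
      (γ i j * ((C *ᵥ x i t - C *ᵥ x j t) ⬝ᵥ (C *ᵥ x i t - C *ᵥ x j t))) / γ i j else 0) =
      if G.Adj i j then 2 * (k i j t - a) *
        ((C *ᵥ x i t - C *ᵥ x j t) ⬝ᵥ (C *ᵥ x i t - C *ᵥ x j t)) else 0 := fun i j => by
    split_ifs with h
    · field_simp [hγ i j h]
    · rfl
  simp only [hcancel]
  exact adaptiveLyapunov_deriv_nonpos hX hf hP hLMI hPB hG hθ ha (fun i j => hksym i j t)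
    (fun i j h => hknonadj i j h t) (fun i => hXinv i t ht)

end Lyapunov

theorem adaptive_weights_monotone_bounded_convergent_general
    {n p N : ℕ}
    (G : SimpleGraph (Fin N)) (hG : G.Connected)
    (f : (Fin n → ℝ) → (Fin n → ℝ))
    (J : (Fin n → ℝ) → Matrix (Fin n) (Fin n) ℝ)
    (hf : ∀ z, HasFDerivAt f ((J z).mulVecLin.toContinuousLinearMap) z)
    (B : Matrix (Fin n) (Fin p) ℝ) (C : Matrix (Fin p) (Fin n) ℝ)
    -- Assumption (OFP)
    (X : Set (Fin n → ℝ)) (hX : Convex ℝ X)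
    (θ : ℝ) (hθ : 0 < θ)
    (P : Matrix (Fin n) (Fin n) ℝ) (hP : P.PosDef)
    (hLMI : ∀ z ∈ X, ∀ v : Fin n → ℝ,
      v ⬝ᵥ ((P * J z + (J z)ᵀ * P) *ᵥ v) ≤ θ * ((C *ᵥ v) ⬝ᵥ (C *ᵥ v)))
    (hPB : P * B = Cᵀ)
    -- a continuously differentiable solution of the adaptively coupled system on `[0,∞)`
    (x : Fin N → ℝ → (Fin n → ℝ)) (k : Fin N → Fin N → ℝ → ℝ)
    (γ : Fin N → Fin N → ℝ)
    (hγpos : ∀ i j, G.Adj i j → 0 < γ i j)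
    (hksym : ∀ i j t, k i j t = k j i t)
    (hknonadj : ∀ i j, ¬ G.Adj i j → ∀ t, k i j t = 0)
    (hxode : ∀ i, ∀ t, 0 ≤ t →
      HasDerivAt (x i)
        (f (x i t) + B *ᵥ (∑ j, k i j t • (C *ᵥ x j t - C *ᵥ x i t))) t)
    (hkode : ∀ i j, G.Adj i j → ∀ t, 0 ≤ t →
      HasDerivAt (k i j)
        (γ i j * ((C *ᵥ x i t - C *ᵥ x j t) ⬝ᵥ (C *ᵥ x i t - C *ᵥ x j t))) t)
    (hXinv : ∀ i, ∀ t, 0 ≤ t → x i t ∈ X) :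
    ∀ i j, G.Adj i j →
      -- (a) nondecreasing on `[0,∞)`
      (∀ s t : ℝ, 0 ≤ s → s ≤ t → k i j s ≤ k i j t) ∧
      -- (b) bounded above
      (∃ M : ℝ, ∀ t : ℝ, 0 ≤ t → k i j t ≤ M) ∧
      -- (c) convergent, with limit `kᵢⱼ(0) + γᵢⱼ ∫₀^∞ |yᵢ - yⱼ|² dt`
      Tendsto (k i j) atTop
        (𝓝 (k i j 0 + γ i j * ∫ t in Set.Ioi (0 : ℝ),
          ((C *ᵥ x i t - C *ᵥ x j t) ⬝ᵥ (C *ᵥ x i t - C *ᵥ x j t)))) := by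
  classical
  intro i j hij
  have hPs : Pᵀ = P := by simpa using hP.isHermitian.eq
  set a := θ * Fintype.card (Fin N) * 4 ^ Fintype.card (Fin N) / 2
  set L := fun t => adaptiveLyapunov G P γ a (x · t) (k · · t)
  have hL : AntitoneOn L (Set.Ici 0) :=
    antitoneOn_adaptiveLyapunov hX (fun z _ => hf z) hPs hLMI hPB hG hθ.le
      (by simp only [a]; linarith) (fun i j h => (hγpos i j h).ne') hksym hknonadj hxode hkode
      hXinv
  have hrate : ∀ t, 0 ≤ t →
      0 ≤ γ i j * ((C *ᵥ x i t - C *ᵥ x j t) ⬝ᵥ (C *ᵥ x i t - C *ᵥ x j t)) :=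
    fun t _ => mul_nonneg (hγpos i j hij).le (dotProduct_self_nonneg _)
  have hbdd : ∀ t, 0 ≤ t → k i j t ≤ a + √(γ i j * L 0) := fun t ht => by
    have hsq := (sq_le_mul_adaptiveLyapunov hP.posSemidef hγpos (x · t) (k · · t) hij).trans
      (mul_le_mul_of_nonneg_left (hL Set.self_mem_Ici ht ht) (hγpos i j hij).le)
    linarith [le_abs_self (k i j t - a), Real.abs_le_sqrt hsq]
  refine ⟨fun s t hs hst => monotoneOn_Ici_of_hasDerivAt_nonneg (hkode i j hij) hrate hs
    (hs.trans hst) hst, ⟨_, hbdd⟩, ?_⟩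
  rw [← integral_const_mul]
  exact tendsto_add_integral_Ioi_of_hasDerivAt_nonneg (hkode i j hij) hrate ⟨_, hbdd⟩

/-- Behavior of the adaptive weights: for the adaptively coupled system
under Assumption (OFP) with states remaining in `X`, each weight `kᵢⱼ` on an edge of `G` is
(a) nondecreasing on `[0,∞)`, (b) bounded above, and (c) convergent, with limit
`kᵢⱼ(0) + γᵢⱼ ∫₀^∞ |yᵢ(t) - yⱼ(t)|² dt`. -/
theorem adaptive_weights_monotone_bounded_convergent
    {n p N : ℕ}
    (G : SimpleGraph (Fin N)) (hG : G.Connected)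
    (f : (Fin n → ℝ) → (Fin n → ℝ))
    (J : (Fin n → ℝ) → Matrix (Fin n) (Fin n) ℝ)
    (hf : ∀ z, HasFDerivAt f ((J z).mulVecLin.toContinuousLinearMap) z)
    (hJcont : Continuous J)
    (B : Matrix (Fin n) (Fin p) ℝ) (C : Matrix (Fin p) (Fin n) ℝ)
    -- Assumption (OFP)
    (X : Set (Fin n → ℝ)) (hX : Convex ℝ X)
    (θ : ℝ) (hθ : 0 < θ)
    (P : Matrix (Fin n) (Fin n) ℝ) (hP : P.PosDef)
    (hLMI : ∀ z ∈ X, ∀ v : Fin n → ℝ,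
      v ⬝ᵥ ((P * J z + (J z)ᵀ * P) *ᵥ v) ≤ θ * ((C *ᵥ v) ⬝ᵥ (C *ᵥ v)))
    (hPB : P * B = Cᵀ)
    -- a continuously differentiable solution of the adaptively coupled system on `[0,∞)`
    (x : Fin N → ℝ → (Fin n → ℝ)) (k : Fin N → Fin N → ℝ → ℝ)
    (γ : Fin N → Fin N → ℝ)
    (hγsym : ∀ i j, γ i j = γ j i)
    (hγpos : ∀ i j, G.Adj i j → 0 < γ i j)
    (hksym : ∀ i j t, k i j t = k j i t)
    (hknonadj : ∀ i j, ¬ G.Adj i j → ∀ t, k i j t = 0)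
    (hxode : ∀ i, ∀ t, 0 ≤ t →
      HasDerivAt (x i)
        (f (x i t) + B *ᵥ (∑ j, k i j t • (C *ᵥ x j t - C *ᵥ x i t))) t)
    (hkode : ∀ i j, G.Adj i j → ∀ t, 0 ≤ t →
      HasDerivAt (k i j)
        (γ i j * ((C *ᵥ x i t - C *ᵥ x j t) ⬝ᵥ (C *ᵥ x i t - C *ᵥ x j t))) t)
    (hXinv : ∀ i, ∀ t, 0 ≤ t → x i t ∈ X) :
    ∀ i j, G.Adj i j →
      -- (a) nondecreasing on `[0,∞)`
      (∀ s t : ℝ, 0 ≤ s → s ≤ t → k i j s ≤ k i j t) ∧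
      -- (b) bounded above
      (∃ M : ℝ, ∀ t : ℝ, 0 ≤ t → k i j t ≤ M) ∧
      -- (c) convergent, with limit `kᵢⱼ(0) + γᵢⱼ ∫₀^∞ |yᵢ - yⱼ|² dt`
      Tendsto (k i j) atTop
        (𝓝 (k i j 0 + γ i j * ∫ t in Set.Ioi (0 : ℝ),
          ((C *ᵥ x i t - C *ᵥ x j t) ⬝ᵥ (C *ᵥ x i t - C *ᵥ x j t)))) :=
  adaptive_weights_monotone_bounded_convergent_general G hG f J hf B C X hX θ hθ P hP hLMI hPB x k γ
    hγpos hksym hknonadj hxode hkode hXinv
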